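/- Let η > 0 and T ≥ 1 be such that (T+1)η ≥ 1, set α = 1/((T+1)η) (so 0 < α ≤ 1), and let f(x) = αx on ℝ. Run projected gradient descent on [−1,1] with step size η started at x_0 = 0 for T iterations. Then no projection is active, the iterates are x_t = −tηα for 0 ≤ t ≤ T, the averaged output is x^GD = −(T+1)ηα/2, and f(x^GD) − f(−1) = α − (T+1)ηα²/2 = 1/(2(T+1)η) ≥ 1/(4ηT). -/

import Mathlib

open scoped BigOperators

/-- Projected gradient descent on `[−1,1]` with step size `η` for the linear function
`f(x) = αx` (whose derivative is `α` everywhere), started at `0`. -/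
noncomputable def linSeq (η α : ℝ) : ℕ → ℝ
  | 0 => 0
  | t + 1 => max (-1) (min 1 (linSeq η α t - η * α))

/-!
While `t · ηα ≤ 1`, the unprojected step `x_t - ηα = -(t+1)ηα` stays in `[-1, 1]`, so the
iterates walk linearly, `x_t = -tηα`. The choice `ηα = 1/(T+1)` keeps all `T` steps unprojected,
and averaging the arithmetic progression gives `x^GD = -(T+1)ηα/2`; the rest is algebra.
-/

open Finset

theorem sum_Icc_one_natCast (T : ℕ) : ∑ t ∈ Icc 1 T, (t : ℝ) = T * (T + 1) / 2 := by
  induction T with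
  | zero => simp
  | succ n ih =>
    rw [sum_Icc_succ_top (by omega), ih]
    push_cast
    ring

section LinSeq

variable {η α : ℝ}

theorem linSeq_eq_of_mul_le_one (hηα : 0 ≤ η * α) {t : ℕ} (ht : (t : ℝ) * (η * α) ≤ 1) :
    linSeq η α t = -(t : ℝ) * η * α := by
  induction t with
  | zero => simp [linSeq]
  | succ s ih =>
    push_cast at ht
    have hs : (s : ℝ) * (η * α) ≤ 1 := by nlinarith
    have hstep : -(s : ℝ) * η * α - η * α = -((s + 1 : ℝ) * (η * α)) := by ring
    rw [linSeq, ih hs, hstep, min_eq_right (by nlinarith), max_eq_right (by linarith)]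
    push_cast
    ring

theorem abs_linSeq_sub_le_one (hηα : 0 ≤ η * α) {t : ℕ} (ht : ((t : ℝ) + 1) * (η * α) ≤ 1) :
    |linSeq η α t - η * α| ≤ 1 := by
  have hle : (t : ℝ) * (η * α) ≤ 1 := by nlinarith
  rw [linSeq_eq_of_mul_le_one hηα hle, abs_le]
  constructor <;> nlinarith [(t.cast_nonneg : (0 : ℝ) ≤ t)]

theorem sum_Icc_linSeq (hηα : 0 ≤ η * α) {T : ℕ} (hT : (T : ℝ) * (η * α) ≤ 1) :
    ∑ t ∈ Icc 1 T, linSeq η α t = -(T * (T + 1) / 2 : ℝ) * η * α := by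
  have hiter : ∀ t ∈ Icc 1 T, linSeq η α t = -(t : ℝ) * η * α := fun t ht ↦
    linSeq_eq_of_mul_le_one hηα <| le_trans
      (mul_le_mul_of_nonneg_right (by exact_mod_cast (mem_Icc.mp ht).2) hηα) hT
  rw [sum_congr rfl hiter, ← sum_Icc_one_natCast, ← sum_neg_distrib, sum_mul, sum_mul]

end LinSeq

theorem gd_linear_lower_bound_general (η : ℝ) (T : ℕ) (hT : 1 ≤ T)
    (h1 : 1 ≤ ((T : ℝ) + 1) * η) (α : ℝ) (hα : α = 1 / (((T : ℝ) + 1) * η)) :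
    (0 < α ∧ α ≤ 1) ∧
    (∀ t ≤ T, |linSeq η α t - η * α| ≤ 1) ∧
    (∀ t ≤ T, linSeq η α t = -(t : ℝ) * η * α) ∧
    (T : ℝ)⁻¹ * ∑ t ∈ Finset.Icc 1 T, linSeq η α t = -(((T : ℝ) + 1) * η * α / 2) ∧
    α * ((T : ℝ)⁻¹ * ∑ t ∈ Finset.Icc 1 T, linSeq η α t) - α * (-1) =
      α - ((T : ℝ) + 1) * η * α ^ 2 / 2 ∧
    α - ((T : ℝ) + 1) * η * α ^ 2 / 2 = 1 / (2 * ((T : ℝ) + 1) * η) ∧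
    1 / (4 * η * (T : ℝ)) ≤ 1 / (2 * ((T : ℝ) + 1) * η) := by
  have hT1 : (0 : ℝ) < T + 1 := by positivity
  have hη : 0 < η := pos_of_mul_pos_right (by linarith) hT1.le
  have hT_one : (1 : ℝ) ≤ T := by exact_mod_cast hT
  have hηα : η * α = 1 / (T + 1) := by rw [hα]; field_simp
  have hηα_nonneg : 0 ≤ η * α := by rw [hηα]; positivity
  have hsteps : ∀ t ≤ T, ((t : ℝ) + 1) * (η * α) ≤ 1 := fun t ht ↦ by
    rw [hηα, mul_one_div, div_le_one hT1]
    exact_mod_cast Nat.succ_le_succ ht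
  have havg : (T : ℝ)⁻¹ * ∑ t ∈ Icc 1 T, linSeq η α t = -(((T : ℝ) + 1) * η * α / 2) := by
    rw [sum_Icc_linSeq hηα_nonneg (by nlinarith [hsteps T le_rfl])]
    field_simp
  refine ⟨⟨by rw [hα]; positivity, by rw [hα, div_le_one (by positivity)]; exact h1⟩,
    fun t ht ↦ abs_linSeq_sub_le_one hηα_nonneg (hsteps t ht),
    fun t ht ↦ linSeq_eq_of_mul_le_one hηα_nonneg (by nlinarith [hsteps t ht]),
    havg, ?_, ?_, ?_⟩
  · rw [havg]; ring
  · rw [hα]; field_simp; ring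
  · rw [div_le_div_iff₀ (by positivity) (by positivity)]
    nlinarith

/-- For `η > 0`, `T ≥ 1` with `(T+1)η ≥ 1` and `α = 1/((T+1)η)` (so
`0 < α ≤ 1`), GD on `f(x) = αx` over `[−1,1]` performs no projections, its iterates are
`x_t = −tηα` for `t ≤ T`, the averaged output is `x^GD = −(T+1)ηα/2`, and
`f(x^GD) − f(−1) = α − (T+1)ηα²/2 = 1/(2(T+1)η) ≥ 1/(4ηT)`. -/
theorem gd_linear_lower_bound (η : ℝ) (hη : 0 < η) (T : ℕ) (hT : 1 ≤ T)
    (h1 : 1 ≤ ((T : ℝ) + 1) * η) (α : ℝ) (hα : α = 1 / (((T : ℝ) + 1) * η)) :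
    (0 < α ∧ α ≤ 1) ∧
    (∀ t ≤ T, |linSeq η α t - η * α| ≤ 1) ∧
    (∀ t ≤ T, linSeq η α t = -(t : ℝ) * η * α) ∧
    (T : ℝ)⁻¹ * ∑ t ∈ Finset.Icc 1 T, linSeq η α t = -(((T : ℝ) + 1) * η * α / 2) ∧
    α * ((T : ℝ)⁻¹ * ∑ t ∈ Finset.Icc 1 T, linSeq η α t) - α * (-1) =
      α - ((T : ℝ) + 1) * η * α ^ 2 / 2 ∧
    α - ((T : ℝ) + 1) * η * α ^ 2 / 2 = 1 / (2 * ((T : ℝ) + 1) * η) ∧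
    1 / (4 * η * (T : ℝ)) ≤ 1 / (2 * ((T : ℝ) + 1) * η) :=
  gd_linear_lower_bound_general η T hT h1 α hα
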